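/- arXiv:1512.03823 — 4 statements merged into one kernel-verified Lean document; each statement's English description precedes it below -/
import Mathlib

section
/- A passive state minimizes energy in its unitary orbit: if ρ is a density matrix diagonal in the eigenbasis of a Hermitian H with eigenvalue populations non-increasing in energy (i.e., ⟨E_k|ρ|E_k⟩ ≥ ⟨E_l|ρ|E_l⟩ whenever E_k ≤ E_l), then for every unitary U, Tr(H U ρ U†) ≥ Tr(H ρ). -/
open Matrix Filter Topology

noncomputable def vnEntropy {n : Type*} [Fintype n] [DecidableEq n] (ρ : Matrix n n ℂ) : ℝ :=
  if h : ρ.IsHermitian then -∑ i, h.eigenvalues i * Real.log (h.eigenvalues i) else 0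

/-! Let `W` be the unitary matrix whose columns are the eigenvectors `v k`, so that
`H = W diag(E) W†` and `ρ = W diag(p) W†`. For unitary `U` and `X = W† U W`,
`Tr(H U ρ U†) = ∑ₖₗ |X_kl|² E_k p_l`, and `(|X_kl|²)` is doubly stochastic. By Birkhoff's
theorem it is a convex combination of permutation matrices, and for each permutation `σ` the
rearrangement inequality gives `∑ₖ E_k p_k ≤ ∑ₖ E_k p_{σ k}`, since `E` and `p` are oppositely
ordered. The case `U = 1` is `Tr(H ρ) = ∑ₖ E_k p_k`. -/

theorem Antivary.dotProduct_le_dotProduct_mulVec {n : Type*} [Fintype n] [DecidableEq n]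
    {f g : n → ℝ} (hfg : Antivary f g) {D : Matrix n n ℝ}
    (hD : D ∈ doublyStochastic ℝ n) :
    f ⬝ᵥ g ≤ f ⬝ᵥ (D *ᵥ g) := by
  rw [← SetLike.mem_coe, doublyStochastic_eq_convexHull_permMatrix] at hD
  refine convexHull_min ?_
    (convex_halfSpace_ge (f := fun M : Matrix n n ℝ => f ⬝ᵥ (M *ᵥ g)) ?_ (f ⬝ᵥ g)) hD
  · rintro _ ⟨σ, rfl⟩
    simpa only [Set.mem_ofPred_eq, permMatrix_mulVec, dotProduct, Function.comp_apply] using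
      hfg.sum_mul_le_sum_mul_comp_perm
  · exact ⟨fun A B => by rw [add_mulVec, dotProduct_add],
      fun c A => by rw [smul_mulVec, dotProduct_smul]⟩

namespace Matrix

variable {n : Type*} [Fintype n] [DecidableEq n]

theorem transpose_of_mem_unitaryGroup_of_orthonormal {R : Type*} [CommRing R] [StarRing R]
    {v : n → n → R} (hv : ∀ k l, star (v k) ⬝ᵥ v l = if k = l then 1 else 0) :
    (of v)ᵀ ∈ unitaryGroup n R := by
  rw [mem_unitaryGroup_iff']
  ext k l
  simpa [mul_apply, one_apply, dotProduct] using hv k l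

theorem eq_conj_diagonal_of_mulVec_eq_smul {R : Type*} [CommRing R] [StarRing R]
    {H : Matrix n n R} {v : n → n → R} {E : n → R}
    (hv : (of v)ᵀ ∈ unitaryGroup n R) (hE : ∀ k, H *ᵥ v k = E k • v k) :
    H = (of v)ᵀ * diagonal E * star (of v)ᵀ := by
  have hcol : H * (of v)ᵀ = (of v)ᵀ * diagonal E := by
    ext i k
    rw [mul_diagonal, mul_apply]
    simpa [mulVec, dotProduct, mul_comm] using congr_fun (hE k) i
  rw [← hcol, mul_assoc, mem_unitaryGroup_iff.mp hv, mul_one]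

theorem sum_smul_vecMulVec_star {R : Type*} [CommSemiring R] [StarRing R]
    (p : n → R) (v : n → n → R) :
    ∑ k, p k • vecMulVec (v k) (star (v k)) = (of v)ᵀ * diagonal p * star (of v)ᵀ := by
  ext i j
  rw [mul_apply]
  simp only [sum_apply, smul_apply, vecMulVec_apply, mul_diagonal, transpose_apply, of_apply,
    star_apply, Pi.star_apply, smul_eq_mul]
  exact Finset.sum_congr rfl fun k _ => by ring

theorem trace_conj_of_mem_unitaryGroup {R : Type*} [CommRing R] [StarRing R]
    {W : Matrix n n R} (hW : W ∈ unitaryGroup n R) (A : Matrix n n R) :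
    (W * A * star W).trace = A.trace := by
  rw [trace_mul_comm, ← mul_assoc, mem_unitaryGroup_iff'.mp hW, one_mul]

theorem map_normSq_mem_doublyStochastic {U : Matrix n n ℂ} (hU : U ∈ unitaryGroup n ℂ) :
    U.map Complex.normSq ∈ doublyStochastic ℝ n := by
  rw [mem_doublyStochastic_iff_sum]
  refine ⟨fun i j => Complex.normSq_nonneg _, fun i => ?_, fun j => ?_⟩
  · have := congr_fun₂ (mem_unitaryGroup_iff.mp hU) i i
    simp only [mul_apply, star_apply, one_apply_eq, RCLike.star_def, Complex.mul_conj] at this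
    exact_mod_cast this
  · have := congr_fun₂ (mem_unitaryGroup_iff'.mp hU) j j
    simp only [mul_apply, star_apply, one_apply_eq, RCLike.star_def,
      ← Complex.normSq_eq_conj_mul_self] at this
    exact_mod_cast this

theorem trace_diagonal_mul_mul_diagonal_mul_star (a b : n → ℝ) (X : Matrix n n ℂ) :
    (diagonal (fun k => (a k : ℂ)) * X * diagonal (fun k => (b k : ℂ)) * star X).trace =
      ((a ⬝ᵥ (X.map Complex.normSq *ᵥ b) : ℝ) : ℂ) := by
  simp only [trace, diag_apply, mul_apply, diagonal_apply, ite_mul, zero_mul, Finset.sum_ite_eq,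
    Finset.mem_univ, ↓reduceIte, mul_ite, mul_zero, Finset.sum_ite_eq', star_apply,
    RCLike.star_def, dotProduct, mulVec, map_apply, Finset.mul_sum, Complex.ofReal_sum,
    Complex.ofReal_mul, Complex.normSq_eq_conj_mul_self]
  exact Finset.sum_congr rfl fun k _ => Finset.sum_congr rfl fun l _ => by ring

theorem trace_conj_mul_unitary_conj_eq_dotProduct_mulVec {W : Matrix n n ℂ}
    (hW : W ∈ unitaryGroup n ℂ) (E p : n → ℝ) (U : Matrix n n ℂ) :
    (W * diagonal (fun k => (E k : ℂ)) * star W *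
        (U * (W * diagonal (fun k => (p k : ℂ)) * star W) * star U)).trace =
      ((E ⬝ᵥ ((star W * U * W).map Complex.normSq *ᵥ p) : ℝ) : ℂ) := by
  rw [← trace_diagonal_mul_mul_diagonal_mul_star, ← trace_conj_of_mem_unitaryGroup hW
    (diagonal _ * (star W * U * W) * diagonal _ * star (star W * U * W))]
  simp only [star_mul, star_star, mul_assoc, mem_unitaryGroup_iff.mp hW, mul_one]

end Matrix

theorem passive_min_energy_unitary_orbit_general {d : ℕ}
    (H : Matrix (Fin d) (Fin d) ℂ)
    (v : Fin d → Fin d → ℂ) (E : Fin d → ℝ)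
    (hon : ∀ k l, star (v k) ⬝ᵥ v l = if k = l then 1 else 0)
    (heig : ∀ k, H.mulVec (v k) = (E k : ℂ) • v k)
    (p : Fin d → ℝ)
    (ρ : Matrix (Fin d) (Fin d) ℂ)
    (hρ : ρ = ∑ k, (p k : ℂ) • Matrix.vecMulVec (v k) (star (v k)))
    (hpassive : ∀ k l, E k ≤ E l → p l ≤ p k)
    (U : Matrix (Fin d) (Fin d) ℂ) (hU : U ∈ Matrix.unitaryGroup (Fin d) ℂ) :
    (H * ρ).trace.re ≤ (H * (U * ρ * star U)).trace.re := by
  have hW := transpose_of_mem_unitaryGroup_of_orthonormal hon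
  have hA : Antivary E p := fun i j hp => le_of_not_gt fun hE => (hpassive i j hE.le).not_gt hp
  rw [eq_conj_diagonal_of_mulVec_eq_smul hW heig, hρ, sum_smul_vecMulVec_star]
  set W := (of v)ᵀ
  calc _ = E ⬝ᵥ p := by
        simpa [mem_unitaryGroup_iff'.mp hW] using
          congrArg Complex.re (trace_conj_mul_unitary_conj_eq_dotProduct_mulVec hW E p 1)
    _ ≤ E ⬝ᵥ ((star W * U * W).map Complex.normSq *ᵥ p) :=
        hA.dotProduct_le_dotProduct_mulVec
          (map_normSq_mem_doublyStochastic (mul_mem (mul_mem (Unitary.star_mem hW) hU) hW))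
    _ = _ := by rw [trace_conj_mul_unitary_conj_eq_dotProduct_mulVec hW, Complex.ofReal_re]

/-- A passive state minimizes energy in its unitary orbit. -/
theorem passive_min_energy_unitary_orbit {d : ℕ}
    (H : Matrix (Fin d) (Fin d) ℂ) (hH : H.IsHermitian)
    (v : Fin d → Fin d → ℂ) (E : Fin d → ℝ)
    (hon : ∀ k l, star (v k) ⬝ᵥ v l = if k = l then 1 else 0)
    (heig : ∀ k, H.mulVec (v k) = (E k : ℂ) • v k)
    (p : Fin d → ℝ) (hp0 : ∀ k, 0 ≤ p k) (hp1 : ∑ k, p k = 1)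
    (ρ : Matrix (Fin d) (Fin d) ℂ)
    (hρ : ρ = ∑ k, (p k : ℂ) • Matrix.vecMulVec (v k) (star (v k)))
    (hpassive : ∀ k l, E k ≤ E l → p l ≤ p k)
    (U : Matrix (Fin d) (Fin d) ℂ) (hU : U ∈ Matrix.unitaryGroup (Fin d) ℂ) :
    (H * ρ).trace.re ≤ (H * (U * ρ * star U)).trace.re :=
  passive_min_energy_unitary_orbit_general H v E hon heig p ρ hρ hpassive U hU
end

section
/- A passive state minimizes energy under mixtures of unitaries: if ρ is passive with respect to H, then for any finite probability distribution (p_i) and unitaries (U_i), Tr(H · Σ_i p_i U_i ρ U_i†) ≥ Tr(H ρ). -/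
open Matrix Filter Topology

lemma trace_mul_vecMulVec {d : ℕ} (H : Matrix (Fin d) (Fin d) ℂ) (x y : Fin d → ℂ) :
    (H * Matrix.vecMulVec x y).trace = y ⬝ᵥ (H *ᵥ x) := by
  simp only [Matrix.trace, Matrix.diag, Matrix.mul_apply, Matrix.vecMulVec_apply,
    dotProduct, Matrix.mulVec, Finset.mul_sum]
  exact Finset.sum_congr rfl fun a _ => Finset.sum_congr rfl fun b _ => by ring

lemma conj_vecMulVec {d : ℕ} (U W : Matrix (Fin d) (Fin d) ℂ) (x y : Fin d → ℂ) :
    U * Matrix.vecMulVec x y * W = Matrix.vecMulVec (U *ᵥ x) (y ᵥ* W) := by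
  ext a b
  simp only [Matrix.mul_apply, Matrix.vecMulVec_apply, Matrix.mulVec, Matrix.vecMul,
    dotProduct, Finset.sum_mul, Finset.mul_sum]
  exact Finset.sum_congr rfl fun c _ => Finset.sum_congr rfl fun e _ => by ring

lemma key_ds {d : ℕ} (p E : Fin d → ℝ) (hpa : Antivary p E)
    (D : Matrix (Fin d) (Fin d) ℝ) (hD : D ∈ doublyStochastic ℝ (Fin d)) :
    ∑ k, p k * E k ≤ ∑ l, ∑ k, D l k * (p k * E l) := by
  obtain ⟨w, hw0, hw1, hwD⟩ := exists_eq_sum_perm_of_mem_doublyStochastic hD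
  have hperm : ∀ σ : Equiv.Perm (Fin d), ∑ k, p k * E k ≤ ∑ l, p (σ l) * E l := by
    intro σ
    simpa [smul_eq_mul] using hpa.sum_smul_le_sum_comp_perm_smul (σ := σ)
  calc ∑ k, p k * E k = ∑ σ : Equiv.Perm (Fin d), w σ * ∑ k, p k * E k := by
        rw [← Finset.sum_mul, hw1, one_mul]
    _ ≤ ∑ σ : Equiv.Perm (Fin d), w σ * ∑ l, p (σ l) * E l :=
        Finset.sum_le_sum fun σ _ => mul_le_mul_of_nonneg_left (hperm σ) (hw0 σ)
    _ = ∑ l, ∑ k, D l k * (p k * E l) := by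
        rw [← hwD]
        simp only [Finset.sum_apply, Matrix.sum_apply, Matrix.smul_apply,
          Equiv.Perm.permMatrix, PEquiv.toMatrix_apply, Equiv.toPEquiv_apply,
          Option.mem_def, Option.some.injEq, smul_eq_mul, Finset.sum_mul, Finset.mul_sum]
        rw [Finset.sum_comm]
        refine Finset.sum_congr rfl fun l _ => ?_
        rw [Finset.sum_comm]
        refine Finset.sum_congr rfl fun σ _ => ?_
        simp [eq_comm]

lemma quad_form {d : ℕ} (H : Matrix (Fin d) (Fin d) ℂ) (v : Fin d → Fin d → ℂ) (E : Fin d → ℝ)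
    (hspec : ∀ a b, H a b = ∑ l, (E l : ℂ) * (v l a * (starRingEnd ℂ) (v l b)))
    (w : Fin d → ℂ) :
    star w ⬝ᵥ (H *ᵥ w) =
      ∑ l, (E l : ℂ) * ((star (v l) ⬝ᵥ w) * (starRingEnd ℂ) (star (v l) ⬝ᵥ w)) := by
  simp only [dotProduct, Matrix.mulVec, Pi.star_apply, Complex.star_def, map_sum, _root_.map_mul,
    Complex.conj_conj, hspec, Finset.sum_mul, Finset.mul_sum]
  conv_rhs => rw [Finset.sum_comm]
  refine Finset.sum_congr rfl fun a _ => ?_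
  conv_rhs => rw [Finset.sum_comm]
  refine Finset.sum_congr rfl fun b _ => Finset.sum_congr rfl fun l _ => by ring
/-- A passive state minimizes energy under mixtures of unitaries. -/
theorem passive_min_energy_mixture_of_unitaries {d s : ℕ}
    (H : Matrix (Fin d) (Fin d) ℂ) (hH : H.IsHermitian)
    (v : Fin d → Fin d → ℂ) (E : Fin d → ℝ)
    (hon : ∀ k l, star (v k) ⬝ᵥ v l = if k = l then 1 else 0)
    (heig : ∀ k, H.mulVec (v k) = (E k : ℂ) • v k)
    (p : Fin d → ℝ) (hp0 : ∀ k, 0 ≤ p k) (hp1 : ∑ k, p k = 1)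
    (ρ : Matrix (Fin d) (Fin d) ℂ)
    (hρ : ρ = ∑ k, (p k : ℂ) • Matrix.vecMulVec (v k) (star (v k)))
    (hpassive : ∀ k l, E k ≤ E l → p l ≤ p k)
    (q : Fin s → ℝ) (hq0 : ∀ i, 0 ≤ q i) (hq1 : ∑ i, q i = 1)
    (U : Fin s → Matrix (Fin d) (Fin d) ℂ)
    (hU : ∀ i, U i ∈ Matrix.unitaryGroup (Fin d) ℂ) :
    (H * ρ).trace.re ≤ (H * ∑ i, (q i : ℂ) • (U i * ρ * star (U i))).trace.re := by
  classical
  set Vc : Matrix (Fin d) (Fin d) ℂ := Matrix.of fun k j => (starRingEnd ℂ) (v k j) with hVc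
  set Vt : Matrix (Fin d) (Fin d) ℂ := (Matrix.of v)ᵀ with hVt
  have hmat : Vc * Vt = 1 := by
    ext k l
    have := hon k l
    simpa [hVc, hVt, Matrix.mul_apply, dotProduct, Matrix.one_apply, Complex.star_def] using this
  have hmat2 : Vt * Vc = 1 := mul_eq_one_comm.mp hmat
  -- spectral decomposition of H
  have hspec : ∀ a b, H a b = ∑ l, (E l : ℂ) * (v l a * (starRingEnd ℂ) (v l b)) := by
    intro a b
    have hH1 : H = H * Vt * Vc := by rw [Matrix.mul_assoc, hmat2, Matrix.mul_one]
    have hHVt : ∀ l, (H * Vt) a l = (E l : ℂ) * v l a := by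
      intro l
      have h1 : (H * Vt) a l = (H *ᵥ v l) a := by
        simp [hVt, Matrix.mul_apply, Matrix.mulVec, dotProduct]
      rw [h1, heig l]
      simp
    conv_lhs => rw [hH1]
    rw [Matrix.mul_apply]
    exact Finset.sum_congr rfl fun l _ => by rw [hHVt l]; simp [hVc, mul_assoc]
  -- trace of H * ρ
  have honkk : ∀ k, star (v k) ⬝ᵥ v k = 1 := by intro k; rw [hon k k]; simp
  have hρtr : (H * ρ).trace = ((∑ k, p k * E k : ℝ) : ℂ) := by
    rw [hρ, Finset.mul_sum]
    push_cast
    rw [Matrix.trace_sum]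
    refine Finset.sum_congr rfl fun k _ => ?_
    rw [mul_smul_comm, Matrix.trace_smul, trace_mul_vecMulVec, heig k]
    rw [dotProduct_smul, honkk k]
    simp [mul_comm]
  -- conjugated states
  have hconj : ∀ i, U i * ρ * star (U i) =
      ∑ k, (p k : ℂ) • Matrix.vecMulVec (U i *ᵥ v k) (star (U i *ᵥ v k)) := by
    intro i
    rw [hρ, Finset.mul_sum, Finset.sum_mul]
    refine Finset.sum_congr rfl fun k _ => ?_
    rw [mul_smul_comm, smul_mul_assoc, conj_vecMulVec]
    rw [Matrix.star_eq_conjTranspose, ← Matrix.star_mulVec]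
  -- the doubly stochastic matrices
  set N : Fin s → Matrix (Fin d) (Fin d) ℂ := fun i => Vc * U i * Vt with hN
  have hNentry : ∀ i l k, N i l k = star (v l) ⬝ᵥ (U i *ᵥ v k) := by
    intro i l k
    simp only [hN, hVc, hVt, Matrix.mul_apply, Matrix.of_apply, Matrix.transpose_apply,
      dotProduct, Matrix.mulVec, Pi.star_apply, Complex.star_def, Finset.sum_mul,
      Finset.mul_sum]
    rw [Finset.sum_comm]
    exact Finset.sum_congr rfl fun a _ => Finset.sum_congr rfl fun b _ => by ring
  have hVcH : Vcᴴ = Vt := by ext a b; simp [hVc, hVt]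
  have hVtH : Vtᴴ = Vc := by ext a b; simp [hVc, hVt]
  have hNU : ∀ i, N i * (N i)ᴴ = 1 := by
    intro i
    have h1 : U i * star (U i) = 1 := (Matrix.mem_unitaryGroup_iff.mp (hU i))
    rw [hN]
    simp only [Matrix.conjTranspose_mul, hVcH, hVtH]
    calc Vc * U i * Vt * (Vc * ((U i)ᴴ * Vt)) = Vc * (U i * (Vt * Vc) * (U i)ᴴ) * Vt := by
          simp only [Matrix.mul_assoc]
      _ = 1 := by
          rw [hmat2, Matrix.mul_one, ← Matrix.star_eq_conjTranspose, h1, Matrix.mul_one, hmat]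
  have hNU2 : ∀ i, (N i)ᴴ * N i = 1 := fun i => mul_eq_one_comm.mp (hNU i)
  set D : Fin s → Matrix (Fin d) (Fin d) ℝ :=
    fun i => Matrix.of fun l k => Complex.normSq (N i l k) with hD
  have hDds : ∀ i, D i ∈ doublyStochastic ℝ (Fin d) := by
    intro i
    rw [mem_doublyStochastic_iff_sum]
    refine ⟨fun l k => Complex.normSq_nonneg _, ?_, ?_⟩
    · intro l
      have h1 : ((∑ k, Complex.normSq (N i l k) : ℝ) : ℂ) = 1 := by
        push_cast
        have := congrFun (congrFun (hNU i) l) l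
        rw [Matrix.mul_apply, Matrix.one_apply_eq] at this
        rw [← this]
        refine Finset.sum_congr rfl fun k _ => ?_
        rw [Matrix.conjTranspose_apply, ← Complex.mul_conj]
        rfl
      exact_mod_cast h1
    · intro k
      have h1 : ((∑ l, Complex.normSq (N i l k) : ℝ) : ℂ) = 1 := by
        push_cast
        have := congrFun (congrFun (hNU2 i) k) k
        rw [Matrix.mul_apply, Matrix.one_apply_eq] at this
        rw [← this]
        refine Finset.sum_congr rfl fun l _ => ?_
        rw [Matrix.conjTranspose_apply, Complex.star_def, mul_comm, ← Complex.mul_conj]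
      exact_mod_cast h1
  -- trace of each conjugated term
  have htr : ∀ i, (H * (U i * ρ * star (U i))).trace =
      ((∑ l, ∑ k, D i l k * (p k * E l) : ℝ) : ℂ) := by
    intro i
    rw [hconj i, Finset.mul_sum, Matrix.trace_sum]
    have hterm : ∀ k, (H * ((p k : ℂ) • Matrix.vecMulVec (U i *ᵥ v k) (star (U i *ᵥ v k)))).trace
        = ((p k : ℝ) : ℂ) * ∑ l, (E l : ℂ) * ((D i l k : ℝ) : ℂ) := by
      intro k
      rw [mul_smul_comm, Matrix.trace_smul, trace_mul_vecMulVec,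
        quad_form H v E hspec (U i *ᵥ v k)]
      rw [smul_eq_mul]
      congr 1
      refine Finset.sum_congr rfl fun l _ => ?_
      congr 1
      rw [← hNentry i l k, Complex.mul_conj]
      rfl
    calc (∑ k, (H * ((p k : ℂ) • Matrix.vecMulVec (U i *ᵥ v k) (star (U i *ᵥ v k)))).trace)
        = ∑ k, ((p k : ℝ) : ℂ) * ∑ l, (E l : ℂ) * ((D i l k : ℝ) : ℂ) := by
          exact Finset.sum_congr rfl fun k _ => hterm k
      _ = ((∑ l, ∑ k, D i l k * (p k * E l) : ℝ) : ℂ) := by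
          push_cast
          rw [Finset.sum_comm]
          refine Finset.sum_congr rfl fun k _ => ?_
          rw [Finset.mul_sum]
          refine Finset.sum_congr rfl fun l _ => by ring
  -- Antivary
  have hpa : Antivary p E := fun i j h => hpassive i j h.le
  -- main computation
  have hRHS : (H * ∑ i, (q i : ℂ) • (U i * ρ * star (U i))).trace =
      ((∑ i, q i * ∑ l, ∑ k, D i l k * (p k * E l) : ℝ) : ℂ) := by
    rw [Finset.mul_sum, Matrix.trace_sum]
    push_cast
    refine Finset.sum_congr rfl fun i _ => ?_
    rw [mul_smul_comm, Matrix.trace_smul, htr i, smul_eq_mul]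
    push_cast
    ring
  rw [hρtr, hRHS, Complex.ofReal_re, Complex.ofReal_re]
  calc ∑ k, p k * E k = ∑ i, q i * ∑ k, p k * E k := by
        rw [← Finset.sum_mul, hq1, one_mul]
    _ ≤ ∑ i, q i * ∑ l, ∑ k, D i l k * (p k * E l) :=
        Finset.sum_le_sum fun i _ =>
          mul_le_mul_of_nonneg_left (key_ds p E hpa (D i) (hDds i)) (hq0 i)
end

section
/- Every Gibbs state at positive inverse temperature is passive: for any Hermitian H and β > 0, the state ω = e^{-βH}/Tr(e^{-βH}) satisfies Tr(H U ω U†) ≥ Tr(H ω) for all unitaries U. -/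
/-!
Diagonalize `H = V diag(E) V†`. Then `ω = V diag(p) V†` with `p` the Boltzmann weights of `E`, and
with the unitary `W = V† U V` one gets `Tr(H ω) = ∑ᵢ Eᵢ pᵢ` and `Tr(H U ω U†) = ∑ᵢⱼ |Wᵢⱼ|² Eᵢ pⱼ`,
where `(|Wᵢⱼ|²)` is doubly stochastic. The tangent line of the exponential gives
`pⱼ (Eᵢ - Eⱼ) ≥ pⱼ/β - pᵢ/β`; averaging with the weights `|Wᵢⱼ|²` the right-hand side telescopes
to `0`, which is the claim.
-/

open Matrix Filter Topology

noncomputable def gibbs {d : ℕ} (H : Matrix (Fin d) (Fin d) ℂ) (β : ℝ) : Matrix (Fin d) (Fin d) ℂ :=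
  (Matrix.trace (NormedSpace.exp ((-β : ℂ) • H)))⁻¹ • NormedSpace.exp ((-β : ℂ) • H)

open Unitary

theorem Real.exp_sub_exp_le_exp_mul_sub (x y : ℝ) :
    Real.exp y - Real.exp x ≤ Real.exp y * (y - x) := by
  have hx : Real.exp x = Real.exp y * Real.exp (x - y) := by rw [← Real.exp_add, add_sub_cancel]
  nlinarith [Real.add_one_le_exp (x - y), Real.exp_pos y]

noncomputable def boltzmann {n : Type*} [Fintype n] (E : n → ℝ) (β : ℝ) (i : n) : ℝ :=
  Real.exp (-(β * E i)) / ∑ j, Real.exp (-(β * E j))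

theorem boltzmann_div_sub_le {n : Type*} [Fintype n] (E : n → ℝ) {β : ℝ} (hβ : 0 < β)
    (i j : n) :
    boltzmann E β j / β - boltzmann E β i / β ≤ (E i - E j) * boltzmann E β j := by
  have hZ : 0 ≤ ∑ k, Real.exp (-(β * E k)) := by positivity
  have htangent : (Real.exp (-(β * E j)) - Real.exp (-(β * E i))) / β ≤
      Real.exp (-(β * E j)) * (E i - E j) := by
    rw [div_le_iff₀ hβ]
    linarith [Real.exp_sub_exp_le_exp_mul_sub (-(β * E i)) (-(β * E j))]
  calc boltzmann E β j / β - boltzmann E β i / β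
      = (Real.exp (-(β * E j)) - Real.exp (-(β * E i))) / β / ∑ k, Real.exp (-(β * E k)) := by
        simp only [boltzmann]; ring
    _ ≤ Real.exp (-(β * E j)) * (E i - E j) / ∑ k, Real.exp (-(β * E k)) :=
        div_le_div_of_nonneg_right htangent hZ
    _ = (E i - E j) * boltzmann E β j := by simp only [boltzmann]; ring

namespace Matrix

variable {n : Type*} [Fintype n] [DecidableEq n]

/-- Only differences of the potential `ν` enter, and their `P`-average vanishes. -/
theorem sum_mul_le_sum_mul_of_mem_doublyStochastic {P : Matrix n n ℝ}
    (hP : P ∈ doublyStochastic ℝ n) {a b ν : n → ℝ} (h : ∀ i j, ν j - ν i ≤ (a i - a j) * b j) :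
    ∑ i, a i * b i ≤ ∑ i, ∑ j, P i j * (a i * b j) := by
  obtain ⟨hnonneg, hrow, hcol⟩ := mem_doublyStochastic_iff_sum.mp hP
  have hcol_sum (f : n → ℝ) : ∑ i, ∑ j, P i j * f j = ∑ j, f j := by
    rw [Finset.sum_comm]; simp [← Finset.sum_mul, hcol]
  have hrow_sum (f : n → ℝ) : ∑ i, ∑ j, P i j * f i = ∑ i, f i := by
    simp [← Finset.sum_mul, hrow]
  have hν : ∑ i, ∑ j, P i j * (ν j - ν i) = 0 := by
    simp only [mul_sub, Finset.sum_sub_distrib, hcol_sum, hrow_sum, sub_self]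
  have hab : ∑ i, ∑ j, P i j * ((a i - a j) * b j) =
      ∑ i, ∑ j, P i j * (a i * b j) - ∑ j, a j * b j := by
    simp only [sub_mul, mul_sub, Finset.sum_sub_distrib, hcol_sum]
  have hle : ∑ i, ∑ j, P i j * (ν j - ν i) ≤ ∑ i, ∑ j, P i j * ((a i - a j) * b j) :=
    Finset.sum_le_sum fun i _ => Finset.sum_le_sum fun j _ =>
      mul_le_mul_of_nonneg_left (h i j) (hnonneg i j)
  linarith

theorem of_norm_sq_mem_doublyStochastic {𝕜 : Type*} [RCLike 𝕜] {W : Matrix n n 𝕜}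
    (hW : W ∈ unitaryGroup n 𝕜) : of (fun i j => ‖W i j‖ ^ 2) ∈ doublyStochastic ℝ n := by
  rw [mem_doublyStochastic_iff_sum]
  refine ⟨fun _ _ => sq_nonneg _, fun i => ?_, fun j => ?_⟩
  · have h := congr_fun (congr_fun hW.2 i) i
    simp only [mul_apply, star_apply, one_apply_eq, RCLike.star_def, RCLike.mul_conj] at h
    exact_mod_cast h
  · have h := congr_fun (congr_fun hW.1 j) j
    simp only [mul_apply, star_apply, one_apply_eq, RCLike.star_def, RCLike.conj_mul] at h
    exact_mod_cast h

section RCLike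

variable {𝕜 : Type*} [RCLike 𝕜]

theorem trace_conjStarAlgAut (V : unitaryGroup n 𝕜) (X : Matrix n n 𝕜) :
    trace (conjStarAlgAut 𝕜 _ V X) = trace X := by
  rw [conjStarAlgAut_apply, trace_mul_cycle, coe_star_mul_self, one_mul]

theorem trace_diagonal_mul_conj_diagonal (a b : n → ℝ) (W : Matrix n n 𝕜) :
    trace (diagonal (RCLike.ofReal ∘ a) * (W * diagonal (RCLike.ofReal ∘ b) * star W)) =
      ((∑ i, ∑ j, ‖W i j‖ ^ 2 * (a i * b j) : ℝ) : 𝕜) := by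
  simp only [← mul_assoc, trace, diag_apply]
  push_cast
  refine Finset.sum_congr rfl fun i _ => ?_
  rw [mul_apply]
  refine Finset.sum_congr rfl fun j _ => ?_
  rw [mul_diagonal, diagonal_mul, star_apply, RCLike.star_def, ← RCLike.mul_conj]
  simp only [Function.comp_apply]
  ring

theorem IsHermitian.trace_mul_conj_diagonal {A : Matrix n n 𝕜} (hA : A.IsHermitian) (b : n → ℝ) :
    trace (A * conjStarAlgAut 𝕜 _ hA.eigenvectorUnitary (diagonal (RCLike.ofReal ∘ b))) =
      ((∑ i, hA.eigenvalues i * b i : ℝ) : 𝕜) := by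
  conv_lhs => arg 1; arg 1; rw [hA.spectral_theorem]
  rw [← map_mul, trace_conjStarAlgAut, diagonal_mul_diagonal, trace_diagonal]
  push_cast
  rfl

theorem IsHermitian.trace_mul_unitary_conj_diagonal {A : Matrix n n 𝕜} (hA : A.IsHermitian)
    (b : n → ℝ) (U : Matrix n n 𝕜) :
    trace (A * (U * conjStarAlgAut 𝕜 _ hA.eigenvectorUnitary (diagonal (RCLike.ofReal ∘ b)) *
        star U)) =
      ((∑ i, ∑ j, ‖(star (hA.eigenvectorUnitary : Matrix n n 𝕜) * U * hA.eigenvectorUnitary) i j‖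
        ^ 2 * (hA.eigenvalues i * b j) : ℝ) : 𝕜) := by
  set V := hA.eigenvectorUnitary
  set W := star (V : Matrix n n 𝕜) * U * V
  have hconj : U * conjStarAlgAut 𝕜 _ V (diagonal (RCLike.ofReal ∘ b)) * star U =
      conjStarAlgAut 𝕜 _ V (W * diagonal (RCLike.ofReal ∘ b) * star W) := by
    simp only [conjStarAlgAut_apply, W, star_mul, star_star, mul_assoc]
    rw [mul_star_self_of_mem V.2, mul_one, ← mul_assoc (V : Matrix n n 𝕜) (star _),
      mul_star_self_of_mem V.2, one_mul]
  conv_lhs => arg 1; arg 1; rw [hA.spectral_theorem]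
  rw [hconj, ← map_mul, trace_conjStarAlgAut]
  exact trace_diagonal_mul_conj_diagonal _ _ _

end RCLike

/- `NormedSpace.map_exp` needs a normed ring; `exp` itself only depends on the topology, which the
operator norm induces. -/
open scoped Norms.Operator in
theorem exp_conjStarAlgAut (V : unitaryGroup n ℂ) (X : Matrix n n ℂ) :
    NormedSpace.exp (conjStarAlgAut ℂ _ V X) = conjStarAlgAut ℂ _ V (NormedSpace.exp X) :=
  (NormedSpace.map_exp (conjStarAlgAut ℂ _ V)
    (conjStarAlgAut ℂ _ V).toAlgEquiv.toLinearEquiv.toLinearMap.continuous_of_finiteDimensional X).symm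

theorem IsHermitian.exp_real_smul {A : Matrix n n ℂ} (hA : A.IsHermitian) (t : ℝ) :
    NormedSpace.exp ((t : ℂ) • A) = conjStarAlgAut ℂ _ hA.eigenvectorUnitary
      (diagonal fun i => (Real.exp (t * hA.eigenvalues i) : ℂ)) := by
  conv_lhs => rw [hA.spectral_theorem, ← map_smul, ← diagonal_smul]
  rw [exp_conjStarAlgAut, exp_diagonal]
  congr 2
  funext i
  simp [Complex.exp_eq_exp_ℂ]

end Matrix

theorem gibbs_eq_conj_boltzmann {d : ℕ} {H : Matrix (Fin d) (Fin d) ℂ} (hH : H.IsHermitian)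
    (β : ℝ) :
    gibbs H β = conjStarAlgAut ℂ _ hH.eigenvectorUnitary
      (diagonal (RCLike.ofReal ∘ boltzmann hH.eigenvalues β)) := by
  have h := hH.exp_real_smul (-β)
  push_cast at h
  rw [gibbs, h, trace_conjStarAlgAut, trace_diagonal, ← map_smul, ← diagonal_smul]
  congr 2
  funext i
  simp [boltzmann, div_eq_inv_mul]

/-- Every Gibbs state at positive inverse temperature is passive. -/
theorem gibbs_is_passive {d : ℕ}
    (H : Matrix (Fin d) (Fin d) ℂ) (hH : H.IsHermitian) (β : ℝ) (hβ : 0 < β)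
    (U : Matrix (Fin d) (Fin d) ℂ) (hU : U ∈ Matrix.unitaryGroup (Fin d) ℂ) :
    (H * gibbs H β).trace.re ≤ (H * (U * gibbs H β * star U)).trace.re := by
  set V := hH.eigenvectorUnitary
  have hW : star (V : Matrix (Fin d) (Fin d) ℂ) * U * V ∈ unitaryGroup (Fin d) ℂ :=
    mul_mem (mul_mem (star_mem V.2) hU) V.2
  rw [gibbs_eq_conj_boltzmann hH, hH.trace_mul_conj_diagonal,
    hH.trace_mul_unitary_conj_diagonal, ← RCLike.re_to_complex, ← RCLike.re_to_complex,
    RCLike.ofReal_re, RCLike.ofReal_re]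
  exact sum_mul_le_sum_mul_of_mem_doublyStochastic (of_norm_sq_mem_doublyStochastic hW)
    (boltzmann_div_sub_le hH.eigenvalues hβ)
end

section
/- Non-passivity example for GGE-ordered fermionic states: for the three-mode free-fermion Hamiltonian with mode energies ε_1 = 1, ε_2 = 2, ε_3 = 2.5 and product state with mode populations p_1 = 0.4, p_2 = 0.3, p_3 = 0.1 (8×8 diagonal density matrix whose eigenvalue on the occupation pattern s ∈ {0,1}³ is Π_i p_i^{s_i}(1−p_i)^{1−s_i}, with energy Σ_i s_i ε_i), the mode populations are decreasing with increasing mode energy, yet the state is not passive: there exist two occupation patterns s, s' with Σ_i s_i ε_i < Σ_i s'_i ε_i but eigenvalue(s) < eigenvalue(s'). -/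
/-!
Ordering the populations mode by mode does not order the patterns: up to the factor
`∏ i, (1 - p i)`, the weight of a pattern is the product of the odds `p i / (1 - p i)` over its
occupied modes. Exciting only the third mode (energy `2.5`) costs less than exciting the first
two (energy `3`), yet its odds `1/9` are below the product `2/3 · 3/7 = 2/7` of theirs.
-/

lemma Antitone.le_of_strictMono_le {α β γ : Type*} [LinearOrder α] [Preorder β] [Preorder γ]
    {ε : α → β} {p : α → γ} (hp : Antitone p) (hε : StrictMono ε) {i j : α}
    (h : ε i ≤ ε j) : p j ≤ p i :=
  hp (hε.le_iff_le.mp h)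

/-- Non-passivity example for GGE-ordered fermionic states: with mode energies
ε = (1, 2, 2.5) and mode populations p = (0.4, 0.3, 0.1), the populations decrease with
increasing mode energy, yet the resulting 8-level diagonal state is not passive. -/
theorem gge_ordered_not_passive :
    let ε : Fin 3 → ℝ := ![1, 2, 2.5]
    let p : Fin 3 → ℝ := ![0.4, 0.3, 0.1]
    let E : (Fin 3 → Bool) → ℝ := fun s => ∑ i, if s i then ε i else 0
    let q : (Fin 3 → Bool) → ℝ := fun s => ∏ i, if s i then p i else 1 - p i
    (∀ i j : Fin 3, ε i ≤ ε j → p j ≤ p i) ∧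
    ∃ s s' : Fin 3 → Bool, E s < E s' ∧ q s < q s' := by
  intro ε p E q
  have hε : StrictMono ε := Fin.strictMono_iff_lt_succ.mpr fun i => by
    fin_cases i <;> norm_num [ε, Matrix.cons_val_two]
  have hp : Antitone p := Fin.antitone_iff_succ_le.mpr fun i => by
    fin_cases i <;> norm_num [p, Matrix.cons_val_two]
  refine ⟨fun i j => hp.le_of_strictMono_le hε,
    ![false, false, true], ![true, true, false], ?_, ?_⟩
  · norm_num [E, ε, Fin.sum_univ_three, Matrix.cons_val_two]
  · norm_num [q, p, Fin.prod_univ_three, Matrix.cons_val_two]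
end
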